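/- arXiv:2209.06990 — 5 statements merged into one kernel-verified Lean document; each statement's English description precedes it below -/
import Mathlib

section
/- Let ω be a weight. Set r_1 = 0 and for each k ≥ 2 choose r_k ∈ [0,1) to be any maximizer of μ_k(x) = x^(k-1)/ω(x) on [0,1). Then the sequence (r_k) is non-decreasing. -/
open Set

theorem maximizers_nondecreasing (ω : ℝ → ℝ)
    (hωc : ContinuousOn ω (Ico 0 1))
    (hωm : MonotoneOn ω (Ico 0 1))
    (hωp : ∀ x ∈ Ico (0:ℝ) 1, 0 < ω x)
    (hωu : ∀ M : ℝ, ∃ x ∈ Ico (0:ℝ) 1, M < ω x)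
    (r : ℕ → ℝ) (hr1 : r 1 = 0)
    (hrmem : ∀ k, 2 ≤ k → r k ∈ Ico (0:ℝ) 1)
    (hrmax : ∀ k, 2 ≤ k → ∀ x ∈ Ico (0:ℝ) 1,
      x ^ (k - 1) / ω x ≤ (r k) ^ (k - 1) / ω (r k)) :
    ∀ k, 1 ≤ k → r k ≤ r (k + 1) := by
  intro k hk
  rcases eq_or_lt_of_le hk with h1 | h2
  · rw [← h1, hr1]
    exact (hrmem 2 le_rfl).1
  · have hk2 : 2 ≤ k := h2
    obtain ⟨j, rfl⟩ : ∃ j, k = j + 1 + 1 := ⟨k - 2, by omega⟩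
    by_contra hlt
    push_neg at hlt
    set a := r (j + 1 + 1 + 1) with ha
    set b := r (j + 1 + 1) with hb
    have hamem := hrmem (j + 1 + 1 + 1) (by omega)
    have hbmem := hrmem (j + 1 + 1) (by omega)
    have hhalf : (1/2 : ℝ) ∈ Ico (0:ℝ) 1 := by norm_num
    have hωh := hωp _ hhalf
    have hωa := hωp _ hamem
    have hωb := hωp _ hbmem
    have hMk : a ^ (j + 1) / ω a ≤ b ^ (j + 1) / ω b := by
      have := hrmax (j + 1 + 1) (by omega) a hamem
      simpa using this
    have hMk1 : b ^ (j + 2) / ω b ≤ a ^ (j + 2) / ω a := by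
      have := hrmax (j + 1 + 1 + 1) (by omega) b hbmem
      simpa using this
    have hbpos : 0 < b := by
      have h := hrmax (j + 1 + 1) (by omega) (1/2) hhalf
      have hpos : 0 < (1/2 : ℝ) ^ (j + 1) / ω (1/2) := by positivity
      have hb' : 0 < b ^ (j + 1) / ω b := lt_of_lt_of_le hpos (by simpa using h)
      by_contra hb0
      push_neg at hb0
      have hb0' : b = 0 := le_antisymm hb0 hbmem.1
      rw [hb0'] at hb'
      simp at hb'
    -- translate to multiplied form
    have h1 : a ^ (j + 1) * ω b ≤ b ^ (j + 1) * ω a :=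
      (div_le_div_iff₀ hωa hωb).mp hMk
    have h2 : b ^ (j + 2) * ω a ≤ a ^ (j + 2) * ω b :=
      (div_le_div_iff₀ hωb hωa).mp hMk1
    have hanneg : 0 ≤ a := hamem.1
    have key : a ^ (j + 2) * ω b < b ^ (j + 2) * ω a := by
      have e1 : a ^ (j + 2) * ω b = a * (a ^ (j + 1) * ω b) := by ring
      have e2 : b ^ (j + 2) * ω a = b * (b ^ (j + 1) * ω a) := by ring
      rw [e1, e2]
      calc a * (a ^ (j + 1) * ω b) ≤ a * (b ^ (j + 1) * ω a) :=
            mul_le_mul_of_nonneg_left h1 hanneg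
        _ < b * (b ^ (j + 1) * ω a) := by
            apply mul_lt_mul_of_pos_right hlt
            positivity
    linarith
end

section
/- Let ω be a weight and (r_k) a sequence with r_k ∈ (0,1) a maximizer of x^(k-1)/ω(x) on [0,1) for each k ≥ 2. If lim_{k→∞} r_k^(k-1) = γ > 0, then lim_{k→∞} ω(r_k)/ω(r_{k+1}) = 1. -/
/-!
Comparing the maximality of `r (k + 1)` at the point `r k`, and of `r k` at the point `r (k + 1)`,
traps `ω (r k) / ω (r (k + 1))` between `q k ^ k` and `q k ^ (k - 1)`, where `q k = r k / r (k + 1)`.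
Since `r k ^ (k - 1) → γ > 0` forces `r k → 1`, both powers of `q k` are quotients of two sequences
tending to `γ`, so both tend to `1`.
-/

open Set Filter Topology

theorem tendsto_nhds_one_of_tendsto_pow_pred {x : ℕ → ℝ} {γ : ℝ} (hγ : 0 < γ)
    (hx : ∀ᶠ k in atTop, x k ∈ Icc 0 1)
    (h : Tendsto (fun k => x k ^ (k - 1)) atTop (𝓝 γ)) :
    Tendsto x atTop (𝓝 1) := by
  refine tendsto_order.2 ⟨fun a ha => ?_, fun a ha => ?_⟩
  · have hb : Tendsto (fun k : ℕ => max a 0 ^ (k - 1)) atTop (𝓝 0) :=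
      (tendsto_pow_atTop_nhds_zero_of_lt_one (le_max_right a 0) (max_lt ha one_pos)).comp
        (tendsto_sub_atTop_nat 1)
    filter_upwards [hb.eventually_lt h hγ, hx] with k hk hxk
    exact (le_max_left a 0).trans_lt (lt_of_pow_lt_pow_left₀ _ hxk.1 hk)
  · filter_upwards [hx] with k hxk
    exact hxk.2.trans_lt ha

theorem tendsto_pow_pred_iff_tendsto_pow {y : ℕ → ℝ} {γ : ℝ} (hy : Tendsto y atTop (𝓝 1)) :
    Tendsto (fun k => y k ^ (k - 1)) atTop (𝓝 γ) ↔ Tendsto (fun k => y k ^ k) atTop (𝓝 γ) := by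
  have hsucc : ∀ᶠ k in atTop, y k ^ k = y k ^ (k - 1) * y k := by
    filter_upwards [eventually_ge_atTop 1] with k hk
    rw [← pow_succ, Nat.sub_add_cancel hk]
  constructor
  · intro h
    simpa using (h.mul hy).congr' (hsucc.mono fun k hk => hk.symm)
  · intro h
    have hdiv := h.div hy one_ne_zero
    rw [div_one] at hdiv
    refine hdiv.congr' ?_
    filter_upwards [hsucc, hy.eventually_ne one_ne_zero] with k hk hy0
    rw [Pi.div_apply, hk, mul_div_cancel_right₀ _ hy0]

theorem div_pow_le_div_of_pow_div_le_pow_div {a b u v : ℝ} {n : ℕ} (hb : 0 < b) (hu : 0 < u)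
    (hv : 0 < v) (h : a ^ n / u ≤ b ^ n / v) : (a / b) ^ n ≤ u / v := by
  rw [div_le_div_iff₀ hu hv] at h
  rw [div_pow, div_le_div_iff₀ (pow_pos hb n) hv]
  linarith [mul_comm u (b ^ n)]

theorem div_le_div_pow_of_pow_div_le_pow_div {a b u v : ℝ} {n : ℕ} (hb : 0 < b) (hu : 0 < u)
    (hv : 0 < v) (h : b ^ n / v ≤ a ^ n / u) : u / v ≤ (a / b) ^ n := by
  rw [div_le_div_iff₀ hv hu] at h
  rw [div_pow, div_le_div_iff₀ hv (pow_pos hb n)]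
  linarith [mul_comm u (b ^ n)]

theorem weight_ratio_tendsto_one_general (ω : ℝ → ℝ)
    (hωp : ∀ x ∈ Ico (0:ℝ) 1, 0 < ω x)
    (r : ℕ → ℝ)
    (hrmem : ∀ k, 2 ≤ k → r k ∈ Ioo (0:ℝ) 1)
    (hrmax : ∀ k, 2 ≤ k → ∀ x ∈ Ico (0:ℝ) 1,
      x ^ (k - 1) / ω x ≤ (r k) ^ (k - 1) / ω (r k))
    (γ : ℝ) (hγ : 0 < γ)
    (hlim : Tendsto (fun k : ℕ => (r k) ^ (k - 1)) atTop (𝓝 γ)) :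
    Tendsto (fun k : ℕ => ω (r k) / ω (r (k + 1))) atTop (𝓝 1) := by
  have hω : ∀ k, 2 ≤ k → 0 < ω (r k) := fun k hk => hωp _ (Ioo_subset_Ico_self (hrmem k hk))
  have hr : Tendsto r atTop (𝓝 1) := tendsto_nhds_one_of_tendsto_pow_pred hγ
    ((eventually_ge_atTop 2).mono fun k hk => Ioo_subset_Icc_self (hrmem k hk)) hlim
  have hr' : Tendsto (fun k => r (k + 1)) atTop (𝓝 1) := hr.comp (tendsto_add_atTop_nat 1)
  have hlim' : Tendsto (fun k => r (k + 1) ^ k) atTop (𝓝 γ) := by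
    simpa [Function.comp_def] using hlim.comp (tendsto_add_atTop_nat 1)
  have hlower : Tendsto (fun k => (r k / r (k + 1)) ^ k) atTop (𝓝 1) := by
    simpa [div_pow, Pi.div_def, hγ.ne'] using
      ((tendsto_pow_pred_iff_tendsto_pow hr).1 hlim).div hlim' hγ.ne'
  have hupper : Tendsto (fun k => (r k / r (k + 1)) ^ (k - 1)) atTop (𝓝 1) := by
    simpa [div_pow, Pi.div_def, hγ.ne'] using
      hlim.div ((tendsto_pow_pred_iff_tendsto_pow hr').2 hlim') hγ.ne'
  refine tendsto_of_tendsto_of_tendsto_of_le_of_le' hlower hupper ?_ ?_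
  · filter_upwards [eventually_ge_atTop 2] with k hk
    refine div_pow_le_div_of_pow_div_le_pow_div (hrmem (k + 1) (by omega)).1 (hω k hk)
      (hω (k + 1) (by omega)) ?_
    simpa only [Nat.add_sub_cancel] using
      hrmax (k + 1) (by omega) (r k) (Ioo_subset_Ico_self (hrmem k hk))
  · filter_upwards [eventually_ge_atTop 2] with k hk
    exact div_le_div_pow_of_pow_div_le_pow_div (hrmem (k + 1) (by omega)).1 (hω k hk)
      (hω (k + 1) (by omega)) (hrmax k hk _ (Ioo_subset_Ico_self (hrmem (k + 1) (by omega))))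

theorem weight_ratio_tendsto_one (ω : ℝ → ℝ)
    (hωc : ContinuousOn ω (Ico 0 1))
    (hωm : MonotoneOn ω (Ico 0 1))
    (hωp : ∀ x ∈ Ico (0:ℝ) 1, 0 < ω x)
    (hωu : ∀ M : ℝ, ∃ x ∈ Ico (0:ℝ) 1, M < ω x)
    (r : ℕ → ℝ)
    (hrmem : ∀ k, 2 ≤ k → r k ∈ Ioo (0:ℝ) 1)
    (hrmax : ∀ k, 2 ≤ k → ∀ x ∈ Ico (0:ℝ) 1,
      x ^ (k - 1) / ω x ≤ (r k) ^ (k - 1) / ω (r k))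
    (γ : ℝ) (hγ : 0 < γ)
    (hlim : Tendsto (fun k : ℕ => (r k) ^ (k - 1)) atTop (𝓝 γ)) :
    Tendsto (fun k : ℕ => ω (r k) / ω (r (k + 1))) atTop (𝓝 1) :=
  weight_ratio_tendsto_one_general ω hωp r hrmem hrmax γ hγ hlim
end

section
/- Let α ∈ (0,∞), β ∈ (-∞, α], and let ψ : [0,∞) → [0,∞) be a majorant (continuous, increasing, ψ(0)=0, and ψ(t)/t non-increasing for t>0) with ψ positive on (0,∞). Then ω(t) = 1/ψ((1-t²)^α (log(e/(1-t²)))^β) is a doubling weight on [0,1). -/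
open Set Real Filter Topology

/-! With `u = 1 - t²` the weight is `1 / ψ (φ u)` for the profile `φ u = u ^ α * (1 - log u) ^ β`,
since `log (e / u) = 1 - log u`. On `(0, 1]` the profile is positive and continuous, tends to `0`
at `0` because `α > 0`, and is increasing because `β ≤ α`: in `log φ = α log u + β log (1 - log u)`
the second term varies more slowly than `log u`. Halving `u` divides `u ^ α` by `2 ^ α` and
changes `1 - log u` by a factor at most `1 + log 2`, so `φ u ≤ K φ (u / 2)`; the majorant property
`ψ (K x) ≤ K ψ x` (for `K ≥ 1`) carries this over to `ψ ∘ φ`, and `1 - (1 - s)² ≤ 2 (1 - (1 - s/2)²)`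
turns it into the doubling inequality for the weight. -/

lemma rpow_le_rpow_abs_mul_rpow {a b c γ : ℝ} (ha : 0 < a) (hab : a ≤ b) (hbc : b ≤ c * a) :
    a ^ γ ≤ c ^ |γ| * b ^ γ := by
  have hc : 1 ≤ c := le_of_mul_le_mul_right (by linarith) ha
  have hc0 : 0 < c := by linarith
  rcases le_or_gt 0 γ with hγ | hγ
  · rw [abs_of_nonneg hγ]
    calc a ^ γ ≤ b ^ γ := rpow_le_rpow ha.le hab hγ
      _ ≤ c ^ γ * b ^ γ := le_mul_of_one_le_left (rpow_nonneg (by linarith) γ) (one_le_rpow hc hγ)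
  · rw [abs_of_neg hγ]
    calc a ^ γ ≤ (b / c) ^ γ := rpow_le_rpow_of_nonpos (div_pos (by linarith) hc0)
          (div_le_of_le_mul₀ hc0.le ha.le (mul_comm c a ▸ hbc)) hγ.le
      _ = c ^ (-γ) * b ^ γ := by
          rw [div_rpow (by linarith) hc0.le, rpow_neg hc0.le]; ring

noncomputable def powLog (α β u : ℝ) : ℝ := u ^ α * (1 - log u) ^ β

section powLog

variable {α β u v : ℝ}

lemma powLog_pos (hu : 0 < u) (hu1 : u ≤ 1) : 0 < powLog α β u := by
  have := log_nonpos hu.le hu1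
  unfold powLog
  exact mul_pos (rpow_pos_of_pos hu α) (rpow_pos_of_pos (by linarith) β)

lemma continuousOn_powLog : ContinuousOn (powLog α β) (Ioc 0 1) := by
  refine (continuousOn_id.rpow_const fun u hu => Or.inl hu.1.ne').mul
    ((continuousOn_const.sub (continuousOn_log.mono fun u hu => hu.1.ne')).rpow_const
      fun u hu => Or.inl ?_)
  exact (sub_pos.2 ((log_nonpos hu.1.le hu.2).trans_lt one_pos)).ne'

lemma log_one_sub_log_sub_log_one_sub_log_le (hu : 0 < u) (huv : u ≤ v) (hv1 : v ≤ 1) :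
    log (1 - log u) - log (1 - log v) ≤ log v - log u := by
  have hlv := log_nonpos (hu.trans_le huv).le hv1
  have hluv := log_le_log hu huv
  rw [← log_div (by linarith) (by linarith)]
  calc log ((1 - log u) / (1 - log v)) ≤ (1 - log u) / (1 - log v) - 1 :=
        log_le_sub_one_of_pos (div_pos (by linarith) (by linarith))
    _ = (log v - log u) / (1 - log v) := by rw [div_sub_one (by linarith)]; ring_nf
    _ ≤ log v - log u := div_le_self (by linarith) (by linarith)

lemma monotoneOn_powLog (hα : 0 ≤ α) (hβ : β ≤ α) : MonotoneOn (powLog α β) (Ioc 0 1) := by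
  intro u ⟨hu, hu1⟩ v ⟨hv, hv1⟩ huv
  have hlu := log_nonpos hu.le hu1
  have hlv := log_nonpos hv.le hv1
  have hD0 : 0 ≤ log (1 - log u) - log (1 - log v) :=
    sub_nonneg.2 (log_le_log (by linarith) (by linarith [log_le_log hu huv]))
  have hD := log_one_sub_log_sub_log_one_sub_log_le hu huv hv1
  unfold powLog
  rw [rpow_def_of_pos hu, rpow_def_of_pos hv, rpow_def_of_pos (by linarith : 0 < 1 - log u),
    rpow_def_of_pos (by linarith : 0 < 1 - log v), ← exp_add, ← exp_add, exp_le_exp]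
  nlinarith [mul_le_mul_of_nonneg_right hβ hD0, mul_le_mul_of_nonneg_left hD hα]

lemma powLog_le_mul_powLog_half (hu : 0 < u) (hu1 : u ≤ 1) :
    powLog α β u ≤ 2 ^ α * (1 + log 2) ^ |β| * powLog α β (u / 2) := by
  have hlu := log_nonpos hu.le hu1
  have hl2 := log_nonneg one_le_two
  have hlog_half : 1 - log (u / 2) = 1 - log u + log 2 := by
    rw [log_div hu.ne' two_ne_zero]; ring
  have hpow : u ^ α = 2 ^ α * (u / 2) ^ α := by
    rw [← mul_rpow zero_le_two (by positivity), mul_div_cancel₀ u two_ne_zero]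
  have hlog : (1 - log u) ^ β ≤ (1 + log 2) ^ |β| * (1 - log (u / 2)) ^ β :=
    rpow_le_rpow_abs_mul_rpow (by linarith) (by linarith) (by rw [hlog_half]; nlinarith)
  have hu2 : 0 ≤ (u / 2) ^ α := rpow_nonneg (by linarith) α
  calc powLog α β u = 2 ^ α * ((u / 2) ^ α * (1 - log u) ^ β) := by rw [powLog, hpow, mul_assoc]
    _ ≤ 2 ^ α * ((u / 2) ^ α * ((1 + log 2) ^ |β| * (1 - log (u / 2)) ^ β)) := by gcongr
    _ = 2 ^ α * (1 + log 2) ^ |β| * powLog α β (u / 2) := by rw [powLog]; ring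

lemma tendsto_rpow_nhdsGT_zero {r : ℝ} (hr : 0 < r) :
    Tendsto (fun u : ℝ => u ^ r) (𝓝[>] 0) (𝓝 0) := by
  simpa [zero_rpow hr.ne'] using
    ((continuous_rpow_const hr.le).tendsto 0).mono_left nhdsWithin_le_nhds

lemma tendsto_rpow_mul_one_sub_log_nhdsGT_zero {r : ℝ} (hr : 0 < r) :
    Tendsto (fun u => u ^ r * (1 - log u)) (𝓝[>] 0) (𝓝 0) := by
  simpa [mul_sub, mul_comm] using
    (tendsto_rpow_nhdsGT_zero hr).sub (tendsto_log_mul_rpow_nhdsGT_zero hr)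

lemma tendsto_powLog_nhdsGT_zero (hα : 0 < α) : Tendsto (powLog α β) (𝓝[>] 0) (𝓝 0) := by
  have hI : Ioo (0 : ℝ) 1 ∈ 𝓝[>] 0 := Ioo_mem_nhdsGT one_pos
  rcases le_or_gt β 0 with hβ | hβ
  · refine tendsto_of_tendsto_of_tendsto_of_le_of_le' tendsto_const_nhds
      (tendsto_rpow_nhdsGT_zero hα) ?_ ?_
    · filter_upwards [hI] with u hu using (powLog_pos hu.1 hu.2.le).le
    · filter_upwards [hI] with u hu
      have := log_nonpos hu.1.le hu.2.le
      calc powLog α β u ≤ u ^ α * 1 := mul_le_mul_of_nonneg_left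
            (rpow_le_one_of_one_le_of_nonpos (by linarith) hβ) (rpow_nonneg hu.1.le α)
        _ = u ^ α := mul_one _
  · have h := (tendsto_rpow_mul_one_sub_log_nhdsGT_zero (div_pos hα hβ)).rpow_const
      (p := β) (Or.inr hβ.le)
    rw [zero_rpow hβ.ne'] at h
    refine h.congr' ?_
    filter_upwards [hI] with u hu
    have := log_nonpos hu.1.le hu.2.le
    rw [powLog, mul_rpow (rpow_nonneg hu.1.le _) (by linarith), ← rpow_mul hu.1.le,
      div_mul_cancel₀ α hβ.ne']

end powLog

structure IsDoublingWeight (ω : ℝ → ℝ) : Prop where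
  continuousOn : ContinuousOn ω (Ico 0 1)
  monotoneOn : MonotoneOn ω (Ico 0 1)
  pos : ∀ x ∈ Ico (0 : ℝ) 1, 0 < ω x
  unbounded : ∀ M : ℝ, ∃ x ∈ Ico (0 : ℝ) 1, M < ω x
  doubling : ∃ C : ℝ, 1 < C ∧ ∀ s ∈ Ioc (0 : ℝ) 1, ω (1 - s / 2) < C * ω (1 - s)

lemma mapsTo_one_sub_sq_Ico_Ioc : MapsTo (fun t : ℝ => 1 - t ^ 2) (Ico 0 1) (Ioc 0 1) :=
  fun t ⟨ht0, ht1⟩ => ⟨by nlinarith, by nlinarith⟩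

lemma tendsto_one_sub_sq_nhdsLT_one :
    Tendsto (fun t : ℝ => 1 - t ^ 2) (𝓝[<] 1) (𝓝[>] 0) := by
  refine tendsto_nhdsWithin_iff.2 ⟨?_, ?_⟩
  · simpa using ((by fun_prop : Continuous fun t : ℝ => 1 - t ^ 2).tendsto 1).mono_left
      nhdsWithin_le_nhds
  · filter_upwards [Ico_mem_nhdsLT one_pos] with t ht
    exact (mapsTo_one_sub_sq_Ico_Ioc ht).1

theorem IsDoublingWeight.of_eqOn {ω Φ : ℝ → ℝ} {K : ℝ} (hc : ContinuousOn Φ (Ioc 0 1))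
    (hm : MonotoneOn Φ (Ioc 0 1)) (hpos : ∀ u ∈ Ioc (0 : ℝ) 1, 0 < Φ u)
    (h0 : Tendsto Φ (𝓝[>] 0) (𝓝 0)) (h2 : ∀ u ∈ Ioc (0 : ℝ) 1, Φ u ≤ K * Φ (u / 2))
    (hω : EqOn ω (fun t => 1 / Φ (1 - t ^ 2)) (Ico 0 1)) : IsDoublingWeight ω where
  continuousOn := (continuousOn_const.div (hc.comp (by fun_prop) mapsTo_one_sub_sq_Ico_Ioc)
    fun t ht => (hpos _ (mapsTo_one_sub_sq_Ico_Ioc ht)).ne').congr hω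
  monotoneOn x hx y hy hxy := by
    rw [hω hx, hω hy]
    exact one_div_le_one_div_of_le (hpos _ (mapsTo_one_sub_sq_Ico_Ioc hy))
      (hm (mapsTo_one_sub_sq_Ico_Ioc hy) (mapsTo_one_sub_sq_Ico_Ioc hx) (by nlinarith [hx.1]))
  pos x hx := by
    rw [hω hx]
    exact one_div_pos.2 (hpos _ (mapsTo_one_sub_sq_Ico_Ioc hx))
  unbounded M := by
    have hΦ : Tendsto Φ (𝓝[>] 0) (𝓝[>] 0) := tendsto_nhdsWithin_iff.2
      ⟨h0, by filter_upwards [Ioc_mem_nhdsGT one_pos] with u hu using hpos u hu⟩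
    have hω1 : Tendsto (fun t => 1 / Φ (1 - t ^ 2)) (𝓝[<] 1) atTop := by
      simpa only [one_div, Function.comp_def] using
        tendsto_inv_nhdsGT_zero.comp (hΦ.comp tendsto_one_sub_sq_nhdsLT_one)
    obtain ⟨x, hxM, hx⟩ :=
      ((hω1.eventually_gt_atTop M).and (Ico_mem_nhdsLT one_pos)).exists
    exact ⟨x, hx, hω hx ▸ hxM⟩
  doubling := by
    refine ⟨max K 1 + 1, by linarith [le_max_right K 1], fun s ⟨hs0, hs1⟩ => ?_⟩
    have hs : 1 - s ∈ Ico (0 : ℝ) 1 := ⟨by linarith, by linarith⟩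
    have hs2 : 1 - s / 2 ∈ Ico (0 : ℝ) 1 := ⟨by linarith, by linarith⟩
    have ha := mapsTo_one_sub_sq_Ico_Ioc hs
    have hb := mapsTo_one_sub_sq_Ico_Ioc hs2
    have ha2 : (1 - (1 - s) ^ 2) / 2 ∈ Ioc (0 : ℝ) 1 := ⟨by linarith [ha.1], by linarith [ha.2]⟩
    have hab : Φ (1 - (1 - s) ^ 2) ≤ max K 1 * Φ (1 - (1 - s / 2) ^ 2) :=
      calc Φ (1 - (1 - s) ^ 2) ≤ K * Φ ((1 - (1 - s) ^ 2) / 2) := h2 _ ha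
        _ ≤ max K 1 * Φ ((1 - (1 - s) ^ 2) / 2) :=
          mul_le_mul_of_nonneg_right (le_max_left K 1) (hpos _ ha2).le
        _ ≤ max K 1 * Φ (1 - (1 - s / 2) ^ 2) :=
          mul_le_mul_of_nonneg_left (hm ha2 hb (by nlinarith)) (by positivity)
    rw [hω hs, hω hs2, mul_one_div, div_lt_div_iff₀ (hpos _ hb) (hpos _ ha)]
    nlinarith [hpos _ hb]

lemma apply_le_mul_apply_of_le_mul {ψ : ℝ → ℝ} (hψm : MonotoneOn ψ (Ici 0))
    (hψmaj : ∀ s t : ℝ, 0 < s → s ≤ t → ψ t / t ≤ ψ s / s) {x y K : ℝ} (hx : 0 ≤ x)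
    (hy : 0 < y) (hK : 1 ≤ K) (hxy : x ≤ K * y) : ψ x ≤ K * ψ y := by
  have hKy : 0 < K * y := by positivity
  have h := hψmaj y (K * y) hy (le_mul_of_one_le_left hy.le hK)
  rw [div_le_div_iff₀ hKy hy] at h
  exact (hψm hx hKy.le hxy).trans (le_of_mul_le_mul_right (h.trans_eq (by ring)) hy)

theorem majorant_weight_doubling (α β : ℝ) (hα : 0 < α) (hβ : β ≤ α)
    (ψ : ℝ → ℝ)
    (hψc : ContinuousOn ψ (Ici 0))
    (hψm : StrictMonoOn ψ (Ici 0))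
    (hψ0 : ψ 0 = 0)
    (hψpos : ∀ t : ℝ, 0 < t → 0 < ψ t)
    (hψmaj : ∀ s t : ℝ, 0 < s → s ≤ t → ψ t / t ≤ ψ s / s)
    (ω : ℝ → ℝ)
    (hω : ∀ t, ω t = 1 / ψ ((1 - t ^ 2) ^ α * (Real.log (Real.exp 1 / (1 - t ^ 2))) ^ β)) :
    ContinuousOn ω (Ico 0 1) ∧
    MonotoneOn ω (Ico 0 1) ∧
    (∀ x ∈ Ico (0:ℝ) 1, 0 < ω x) ∧
    (∀ M : ℝ, ∃ x ∈ Ico (0:ℝ) 1, M < ω x) ∧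
    ∃ C : ℝ, 1 < C ∧ ∀ s ∈ Ioc (0:ℝ) 1, ω (1 - s / 2) < C * ω (1 - s) := by
  have hφ : MapsTo (powLog α β) (Ioc 0 1) (Ici 0) := fun u hu => (powLog_pos hu.1 hu.2).le
  have hK : 1 ≤ 2 ^ α * (1 + log 2) ^ |β| := one_le_mul_of_one_le_of_one_le
    (one_le_rpow one_le_two hα.le) (one_le_rpow (by linarith [log_nonneg one_le_two]) (abs_nonneg β))
  have h0 : Tendsto (ψ ∘ powLog α β) (𝓝[>] 0) (𝓝 0) := by
    have hψ := (hψc 0 self_mem_Ici).tendsto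
    rw [hψ0] at hψ
    refine hψ.comp (tendsto_nhdsWithin_iff.2 ⟨tendsto_powLog_nhdsGT_zero hα, ?_⟩)
    filter_upwards [Ioc_mem_nhdsGT one_pos] with u hu using hφ hu
  have hW : IsDoublingWeight ω := IsDoublingWeight.of_eqOn (hψc.comp continuousOn_powLog hφ)
    (hψm.monotoneOn.comp (monotoneOn_powLog hα.le hβ) hφ)
    (fun u hu => hψpos _ (powLog_pos hu.1 hu.2)) h0
    (fun u hu => apply_le_mul_apply_of_le_mul hψm.monotoneOn hψmaj (hφ hu)
      (powLog_pos (half_pos hu.1) (by linarith [hu.2])) hK (powLog_le_mul_powLog_half hu.1 hu.2))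
    fun t ht => by
      rw [hω, log_div (exp_ne_zero 1) (mapsTo_one_sub_sq_Ico_Ioc ht).1.ne', log_exp]; rfl
  exact ⟨hW.continuousOn, hW.monotoneOn, hW.pos, hW.unbounded, hW.doubling⟩
end

section
/- Let α ∈ (0,1), ω₁(t) = 1/(1-t)^(1-α), r_k = (k-1)/(k-α) for k ≥ 2 (r_1 = 0). For f_k(w) = w^k (k ≥ 2), the Bloch-type seminorm satisfies sup_{w∈𝔻} k|w|^(k-1)/ω₁(|w|) = k r_k^(k-1)/ω₁(r_k) = k r_k^(k-1) (1-r_k)^(1-α), and consequently lim_{k→∞} (ω₁(r_k)/k) · sup_{w∈𝔻} k|w|^(k-1)/ω₁(|w|) = lim_{k→∞} r_k^(k-1) = e^(α-1) > 0. -/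
open Set Filter Topology

lemma le_mul_exp_div_sub_one {a : ℝ} (x : ℝ) (ha : 0 < a) : x ≤ a * Real.exp (x / a - 1) := by
  have h := Real.add_one_le_exp (x / a - 1)
  rw [sub_add_cancel, div_le_iff₀ ha] at h
  linarith

lemma pow_mul_one_sub_rpow_le {n : ℕ} {β t : ℝ} (hn : n ≠ 0) (hβ : 0 < β)
    (ht0 : 0 ≤ t) (ht1 : t ≤ 1) :
    t ^ n * (1 - t) ^ β ≤ (n / (n + β)) ^ n * (1 - n / (n + β)) ^ β := by
  -- Bound both factors by the tangent line of `exp` at the critical point `s`;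
  -- the exponents then cancel because `n / s = β / (1 - s) = n + β`.
  set s : ℝ := n / (n + β) with hs
  have hn0 : (0 : ℝ) < n := by positivity
  have hs0 : 0 < s := by positivity
  have hs1 : 1 - s = β / (n + β) := by rw [hs]; field_simp; ring
  have hs1_pos : 0 < 1 - s := by rw [hs1]; positivity
  have hpow : t ^ n ≤ s ^ n * Real.exp (n * (t / s - 1)) := by
    calc t ^ n ≤ (s * Real.exp (t / s - 1)) ^ n :=
          pow_le_pow_left₀ ht0 (le_mul_exp_div_sub_one t hs0) n
      _ = s ^ n * Real.exp (n * (t / s - 1)) := by rw [mul_pow, Real.exp_nat_mul]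
  have hrpow : (1 - t) ^ β ≤ (1 - s) ^ β * Real.exp (β * ((1 - t) / (1 - s) - 1)) := by
    calc (1 - t) ^ β ≤ ((1 - s) * Real.exp ((1 - t) / (1 - s) - 1)) ^ β :=
          Real.rpow_le_rpow (by linarith) (le_mul_exp_div_sub_one _ hs1_pos) hβ.le
      _ = (1 - s) ^ β * Real.exp (β * ((1 - t) / (1 - s) - 1)) := by
          rw [Real.mul_rpow hs1_pos.le (Real.exp_pos _).le, ← Real.exp_mul, mul_comm β]
  have hexp : n * (t / s - 1) + β * ((1 - t) / (1 - s) - 1) = 0 := by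
    rw [hs1, hs]; field_simp; ring
  calc t ^ n * (1 - t) ^ β
      ≤ s ^ n * Real.exp (n * (t / s - 1)) *
          ((1 - s) ^ β * Real.exp (β * ((1 - t) / (1 - s) - 1))) :=
        mul_le_mul hpow hrpow (by positivity) (by positivity)
    _ = s ^ n * (1 - s) ^ β * Real.exp (n * (t / s - 1) + β * ((1 - t) / (1 - s) - 1)) := by
        rw [Real.exp_add]; ring
    _ = s ^ n * (1 - s) ^ β := by rw [hexp, Real.exp_zero, mul_one]

lemma tendsto_div_add_pow_exp_neg (β : ℝ) :
    Tendsto (fun n : ℕ => ((n : ℝ) / (n + β)) ^ n) atTop (𝓝 (Real.exp (-β))) := by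
  have h := (Real.tendsto_one_add_div_pow_exp β).inv₀ (Real.exp_ne_zero β)
  rw [← Real.exp_neg] at h
  refine h.congr' ?_
  filter_upwards [eventually_ne_atTop 0] with n hn
  have hn0 : (n : ℝ) ≠ 0 := Nat.cast_ne_zero.mpr hn
  rw [← inv_pow, one_add_div hn0, inv_div]

theorem monomial_bloch_seminorm_general (α : ℝ) (hα : α ∈ Ioo (0:ℝ) 1)
    (ω₁ : ℝ → ℝ) (hω₁ : ∀ t, ω₁ t = 1 / (1 - t) ^ (1 - α))
    (r : ℕ → ℝ)
    (hr : ∀ k : ℕ, 2 ≤ k → r k = ((k : ℝ) - 1) / ((k : ℝ) - α)) :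
    (∀ k : ℕ, 2 ≤ k →
      (∀ w : ℂ, ‖w‖ < 1 →
        (k : ℝ) * ‖w‖ ^ (k - 1) / ω₁ ‖w‖ ≤
          (k : ℝ) * (r k) ^ (k - 1) * (1 - r k) ^ (1 - α)) ∧
      (k : ℝ) * (r k) ^ (k - 1) / ω₁ (r k) =
        (k : ℝ) * (r k) ^ (k - 1) * (1 - r k) ^ (1 - α)) ∧
    Tendsto
      (fun k : ℕ => ω₁ (r k) / (k : ℝ) * ((k : ℝ) * (r k) ^ (k - 1) / ω₁ (r k)))
      atTop (𝓝 (Real.exp (α - 1))) ∧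
    0 < Real.exp (α - 1) := by
  have hβ : 0 < 1 - α := sub_pos.mpr hα.2
  have hdiv_ω₁ (x t : ℝ) : x / ω₁ t = x * (1 - t) ^ (1 - α) := by
    rw [hω₁, one_div, div_inv_eq_mul]
  have hr_eq (k : ℕ) (hk : 2 ≤ k) :
      r k = ((k - 1 : ℕ) : ℝ) / ((k - 1 : ℕ) + (1 - α)) := by
    rw [hr k hk, Nat.cast_sub (by omega)]; ring_nf
  refine ⟨fun k hk => ⟨fun w hw => ?_, hdiv_ω₁ _ _⟩, ?_, Real.exp_pos _⟩
  · rw [hdiv_ω₁, mul_assoc, mul_assoc, hr_eq k hk]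
    exact mul_le_mul_of_nonneg_left (pow_mul_one_sub_rpow_le (by omega) hβ (norm_nonneg w)
      hw.le) k.cast_nonneg
  · have hlim := (tendsto_div_add_pow_exp_neg (1 - α)).comp (tendsto_sub_atTop_nat 1)
    rw [neg_sub] at hlim
    refine hlim.congr' ?_
    filter_upwards [eventually_ge_atTop 2] with k hk
    have hrk1 : r k < 1 := by
      rw [hr k hk, div_lt_one (by linarith [hα.2, (show (2 : ℝ) ≤ k by exact_mod_cast hk)])]
      linarith [hα.1]
    have hω₁_ne : ω₁ (r k) ≠ 0 := by
      rw [hω₁]; have := Real.rpow_pos_of_pos (sub_pos.mpr hrk1) (1 - α); positivity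
    have hk0 : (k : ℝ) ≠ 0 := by positivity
    rw [Function.comp_apply, ← hr_eq k hk]
    field_simp

theorem monomial_bloch_seminorm (α : ℝ) (hα : α ∈ Ioo (0:ℝ) 1)
    (ω₁ : ℝ → ℝ) (hω₁ : ∀ t, ω₁ t = 1 / (1 - t) ^ (1 - α))
    (r : ℕ → ℝ) (hr1 : r 1 = 0)
    (hr : ∀ k : ℕ, 2 ≤ k → r k = ((k : ℝ) - 1) / ((k : ℝ) - α)) :
    (∀ k : ℕ, 2 ≤ k →
      (∀ w : ℂ, ‖w‖ < 1 →
        (k : ℝ) * ‖w‖ ^ (k - 1) / ω₁ ‖w‖ ≤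
          (k : ℝ) * (r k) ^ (k - 1) * (1 - r k) ^ (1 - α)) ∧
      (k : ℝ) * (r k) ^ (k - 1) / ω₁ (r k) =
        (k : ℝ) * (r k) ^ (k - 1) * (1 - r k) ^ (1 - α)) ∧
    Tendsto
      (fun k : ℕ => ω₁ (r k) / (k : ℝ) * ((k : ℝ) * (r k) ^ (k - 1) / ω₁ (r k)))
      atTop (𝓝 (Real.exp (α - 1))) ∧
    0 < Real.exp (α - 1) :=
  monomial_bloch_seminorm_general α hα ω₁ hω₁ r hr
end

section
/- Let ω be a weight, let γ > 0, and let (r_k) be a non-decreasing sequence in [0,1) with r_1 = 0, each r_k (k≥2) maximizing x^(k-1)/ω(x), and r_k^(k-1) → γ. Then there exists a positive integer m₀ such that for all k ≥ m₀ and all x ∈ [r_k, r_{k+1}], ω(r_k) x^(k-1)/ω(x) ≥ γ/2. -/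
/-!
Maximality of `r (k+1)`, tested at `r k`, gives `ω (r k) / ω (r (k+1)) ≥ (r k / r (k+1)) ^ k`.
Together with monotonicity of `ω` this bounds `ω (r k) x ^ (k-1) / ω x` on `[r k, r (k+1)]`
from below by `r k ^ (k-1) * (r k / r (k+1)) ^ k`, which tends to `γ * γ / γ = γ`
because `r k ^ (k-1) → γ > 0` forces `r k → 1`.
-/

open Set Filter Topology

theorem tendsto_one_of_tendsto_pow_pos {a : ℕ → ℝ} (ha : ∀ n, a n ∈ Icc (0:ℝ) 1)
    {γ : ℝ} (hγ : 0 < γ) (h : Tendsto (fun n => a n ^ n) atTop (𝓝 γ)) :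
    Tendsto a atTop (𝓝 1) := by
  have hroot : Tendsto (fun n : ℕ => (γ / 2) ^ (n : ℝ)⁻¹) atTop (𝓝 1) := by
    have hcont := Real.continuousAt_const_rpow (b := 0) (half_pos hγ).ne'
    simpa [Function.comp_def] using
      (hcont.tendsto.comp tendsto_inv_atTop_zero).comp tendsto_natCast_atTop_atTop
  have hlow : ∀ᶠ n : ℕ in atTop, (γ / 2) ^ (n : ℝ)⁻¹ ≤ a n := by
    filter_upwards [h.eventually (eventually_ge_nhds (half_lt_self hγ)),
      eventually_ne_atTop 0] with n hn hn0
    calc (γ / 2) ^ (n : ℝ)⁻¹ ≤ (a n ^ n) ^ (n : ℝ)⁻¹ := by gcongr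
      _ = a n := Real.pow_rpow_inv_natCast (ha n).1 hn0
  exact tendsto_of_tendsto_of_tendsto_of_le_of_le' hroot tendsto_const_nhds hlow
    (Eventually.of_forall fun n => (ha n).2)

section Maximizers

variable {ω : ℝ → ℝ} {r : ℕ → ℝ}

theorem pow_div_pow_le_weight_div (hωp : ∀ x ∈ Ico (0:ℝ) 1, 0 < ω x)
    (hrmem : ∀ k, r k ∈ Ico (0:ℝ) 1)
    (hrmax : ∀ k, 2 ≤ k → ∀ x ∈ Ico (0:ℝ) 1,
      x ^ (k - 1) / ω x ≤ (r k) ^ (k - 1) / ω (r k)) (n : ℕ) :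
    r (n + 1) ^ (n + 1) / r (n + 2) ^ (n + 1) ≤ ω (r (n + 1)) / ω (r (n + 2)) := by
  have hω₁ := hωp _ (hrmem (n + 1))
  have hω₂ := hωp _ (hrmem (n + 2))
  have hmax := hrmax (n + 2) (by omega) (r (n + 1)) (hrmem (n + 1))
  rw [show n + 2 - 1 = n + 1 by omega] at hmax
  rcases (pow_nonneg (hrmem (n + 2)).1 (n + 1)).eq_or_lt with h0 | hpos
  · rw [← h0, div_zero]
    positivity
  · rw [div_le_div_iff₀ hpos hω₂]
    rw [div_le_div_iff₀ hω₁ hω₂] at hmax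
    linarith

theorem le_weight_mul_pow_div_of_mem_Icc (hωm : MonotoneOn ω (Ico 0 1))
    (hωp : ∀ x ∈ Ico (0:ℝ) 1, 0 < ω x) (hrmem : ∀ k, r k ∈ Ico (0:ℝ) 1)
    (hrmax : ∀ k, 2 ≤ k → ∀ x ∈ Ico (0:ℝ) 1,
      x ^ (k - 1) / ω x ≤ (r k) ^ (k - 1) / ω (r k))
    (n : ℕ) {x : ℝ} (hx : x ∈ Icc (r (n + 1)) (r (n + 2))) :
    r (n + 1) ^ n * (r (n + 1) ^ (n + 1) / r (n + 2) ^ (n + 1)) ≤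
      ω (r (n + 1)) * x ^ n / ω x := by
  have hr₀ : 0 ≤ r (n + 1) := (hrmem _).1
  have hx₀ : x ∈ Ico (0:ℝ) 1 := ⟨hr₀.trans hx.1, hx.2.trans_lt (hrmem _).2⟩
  have hωr := hωp _ (hrmem (n + 1))
  have hωx := hωp x hx₀
  calc r (n + 1) ^ n * (r (n + 1) ^ (n + 1) / r (n + 2) ^ (n + 1))
      ≤ x ^ n * (ω (r (n + 1)) / ω (r (n + 2))) :=
        mul_le_mul (pow_le_pow_left₀ hr₀ hx.1 n)
          (pow_div_pow_le_weight_div hωp hrmem hrmax n)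
          (div_nonneg (pow_nonneg hr₀ _) (pow_nonneg (hrmem _).1 _)) (pow_nonneg hx₀.1 n)
    _ ≤ x ^ n * (ω (r (n + 1)) / ω x) :=
        mul_le_mul_of_nonneg_left
          (div_le_div_of_nonneg_left hωr.le hωx (hωm hx₀ (hrmem _) hx.2)) (pow_nonneg hx₀.1 n)
    _ = ω (r (n + 1)) * x ^ n / ω x := by ring

end Maximizers

theorem maximizer_lower_bound_general (ω : ℝ → ℝ)
    (hωm : MonotoneOn ω (Ico 0 1))
    (hωp : ∀ x ∈ Ico (0:ℝ) 1, 0 < ω x)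
    (γ : ℝ) (hγ : 0 < γ)
    (r : ℕ → ℝ)
    (hrmem : ∀ k, r k ∈ Ico (0:ℝ) 1)
    (hrmax : ∀ k, 2 ≤ k → ∀ x ∈ Ico (0:ℝ) 1,
      x ^ (k - 1) / ω x ≤ (r k) ^ (k - 1) / ω (r k))
    (hlim : Tendsto (fun k : ℕ => (r k) ^ (k - 1)) atTop (𝓝 γ)) :
    ∃ m₀ : ℕ, 0 < m₀ ∧ ∀ k, m₀ ≤ k → ∀ x ∈ Icc (r k) (r (k + 1)),
      γ / 2 ≤ ω (r k) * x ^ (k - 1) / ω x := by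
  have hpow₁ : Tendsto (fun n => r (n + 1) ^ n) atTop (𝓝 γ) := by
    simpa [Function.comp_def] using hlim.comp (tendsto_add_atTop_nat 1)
  have hpow₂ : Tendsto (fun n => r (n + 2) ^ (n + 1)) atTop (𝓝 γ) := by
    simpa [Function.comp_def] using hlim.comp (tendsto_add_atTop_nat 2)
  have hr : Tendsto (fun n => r (n + 1)) atTop (𝓝 1) :=
    tendsto_one_of_tendsto_pow_pos (fun n => Ico_subset_Icc_self (hrmem (n + 1))) hγ hpow₁
  have hbound : Tendsto (fun n => r (n + 1) ^ n * (r (n + 1) ^ (n + 1) / r (n + 2) ^ (n + 1)))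
      atTop (𝓝 γ) := by
    simpa only [← pow_succ, Pi.div_apply, mul_one, div_self hγ.ne'] using
      hpow₁.mul ((hpow₁.mul hr).div hpow₂ hγ.ne')
  obtain ⟨N, hN⟩ :=
    (hbound.eventually (eventually_ge_nhds (half_lt_self hγ))).exists_forall_of_atTop
  refine ⟨N + 1, N.succ_pos, fun k hk x hx => ?_⟩
  obtain ⟨n, rfl⟩ : ∃ n, k = n + 1 := ⟨k - 1, by omega⟩
  simpa using
    (hN n (by omega)).trans (le_weight_mul_pow_div_of_mem_Icc hωm hωp hrmem hrmax n hx)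

theorem maximizer_lower_bound (ω : ℝ → ℝ)
    (hωc : ContinuousOn ω (Ico 0 1))
    (hωm : MonotoneOn ω (Ico 0 1))
    (hωp : ∀ x ∈ Ico (0:ℝ) 1, 0 < ω x)
    (hωu : ∀ M : ℝ, ∃ x ∈ Ico (0:ℝ) 1, M < ω x)
    (γ : ℝ) (hγ : 0 < γ)
    (r : ℕ → ℝ) (hr1 : r 1 = 0)
    (hrmono : ∀ k l : ℕ, k ≤ l → r k ≤ r l)
    (hrmem : ∀ k, r k ∈ Ico (0:ℝ) 1)
    (hrmax : ∀ k, 2 ≤ k → ∀ x ∈ Ico (0:ℝ) 1,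
      x ^ (k - 1) / ω x ≤ (r k) ^ (k - 1) / ω (r k))
    (hlim : Tendsto (fun k : ℕ => (r k) ^ (k - 1)) atTop (𝓝 γ)) :
    ∃ m₀ : ℕ, 0 < m₀ ∧ ∀ k, m₀ ≤ k → ∀ x ∈ Icc (r k) (r (k + 1)),
      γ / 2 ≤ ω (r k) * x ^ (k - 1) / ω x :=
  maximizer_lower_bound_general ω hωm hωp γ hγ r hrmem hrmax hlim
end
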